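/- For every nonzero real number ε, the alternating bilinear bracket on the 7-dimensional real vector space with basis X₁,…,X₇ obtained from the bracket of L_{7,3}² by adding the relation [X₄,X₅] = εX₆ satisfies the Jacobi identity, and the resulting Lie algebra is isomorphic to L_{7,4}. -/

import Mathlib

/-!
The linear isomorphism sending `Xᵢ ↦ Yᵢ` for `i ≠ 6` and `X₆ ↦ ε⁻¹ Y₆` (where `Yᵢ` is the basis
of `L_{7,4}`) carries the deformed bracket to the bracket of `L_{7,4}`: the new relation
`[X₄,X₅] = εX₆` becomes `[Y₄,Y₅] = Y₆`, and every other relation of `L_{7,3}²` is linear in `X₆`.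
Alternation and the Jacobi identity of the deformed bracket are then pulled back from `L_{7,4}`
along this injective map.
-/

/-- Structure constants of `L_{7,3}²` (upper triangular part, 0-based indices). -/
def L732T {L : Type*} [AddCommGroup L] [Module ℝ L] (b : Fin 7 → L) : Fin 7 → Fin 7 → L :=
  fun i j =>
    if i = 0 ∧ j = 1 then (2 : ℝ) • b 1 else
    if i = 0 ∧ j = 2 then (-2 : ℝ) • b 2 else
    if i = 1 ∧ j = 2 then b 0 else
    if i = 0 ∧ j = 3 then b 3 else
    if i = 0 ∧ j = 4 then -b 4 else
    if i = 1 ∧ j = 4 then b 3 else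
    if i = 2 ∧ j = 3 then b 4 else
    if i = 3 ∧ j = 6 then b 3 else
    if i = 4 ∧ j = 6 then b 4 else
    if i = 5 ∧ j = 6 then (2 : ℝ) • b 5 else 0

/-- Structure constants of `L_{7,4}` (upper triangular part, 0-based indices). -/
def L74T {L : Type*} [AddCommGroup L] [Module ℝ L] (b : Fin 7 → L) : Fin 7 → Fin 7 → L :=
  fun i j =>
    if i = 0 ∧ j = 1 then (2 : ℝ) • b 1 else
    if i = 0 ∧ j = 2 then (-2 : ℝ) • b 2 else
    if i = 1 ∧ j = 2 then b 0 else
    if i = 0 ∧ j = 3 then b 3 else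
    if i = 0 ∧ j = 4 then -b 4 else
    if i = 1 ∧ j = 4 then b 3 else
    if i = 2 ∧ j = 3 then b 4 else
    if i = 3 ∧ j = 4 then b 5 else
    if i = 3 ∧ j = 6 then b 3 else
    if i = 4 ∧ j = 6 then b 4 else
    if i = 5 ∧ j = 6 then (2 : ℝ) • b 5 else 0

/-- The alternating table supported on a single pair `(i0, j0)` with value `v`. -/
def skewPair {n : ℕ} {L : Type*} [AddCommGroup L] (i0 j0 : Fin n) (v : L) :
    Fin n → Fin n → L :=
  fun i j => if i = i0 ∧ j = j0 then v else if i = j0 ∧ j = i0 then -v else 0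

/-- The bilinear map with `φ(X₄,X₅) = X₆` (0-based: `φ(b 3, b 4) = b 5`) on basis elements. -/
noncomputable def addRel45 {L : Type*} [LieRing L] [LieAlgebra ℝ L]
    (b : Module.Basis (Fin 7) ℝ L) : L →ₗ[ℝ] L →ₗ[ℝ] L :=
  b.constr ℝ fun i => b.constr ℝ fun j => skewPair 3 4 (b 5) i j

open Module

section Transport

variable {L M : Type*} [AddCommGroup L] [LieRing M]

theorem self_eq_zero_of_map_eq_lie (f : L →+ M) (hf : Function.Injective f) (B : L → L → L)
    (hB : ∀ X Y, f (B X Y) = ⁅f X, f Y⁆) (X : L) : B X X = 0 :=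
  hf <| by rw [hB, lie_self, map_zero]

theorem jacobi_of_map_eq_lie (f : L →+ M) (hf : Function.Injective f) (B : L → L → L)
    (hB : ∀ X Y, f (B X Y) = ⁅f X, f Y⁆) (X Y Z : L) :
    B X (B Y Z) + B Z (B X Y) + B Y (B Z X) = 0 :=
  hf <| by
    rw [map_zero, ← lie_jacobi (f X) (f Y) (f Z)]
    simp only [map_add, hB]
    abel

end Transport

theorem map_apply_eq_lie_of_basis {ι R L M : Type*} [CommRing R] [AddCommGroup L] [Module R L]
    [LieRing M] [LieAlgebra R M] (b : Basis ι R L) (f : L →ₗ[R] M) (B : L →ₗ[R] L →ₗ[R] L)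
    (h : ∀ i j, f (B (b i) (b j)) = ⁅f (b i), f (b j)⁆) (X Y : L) :
    f (B X Y) = ⁅f X, f Y⁆ := by
  have hB : B.compr₂ f = ((LieModule.toEnd R M M : M →ₗ[R] Module.End R M) ∘ₗ f).compl₂ f :=
    LinearMap.ext_basis b b fun i j => by simpa using h i j
  simpa using LinearMap.congr_fun₂ hB X Y

theorem lie_eq_sub_of_upper {ι L : Type*} [LinearOrder ι] [LieRing L] (b : ι → L)
    (T : ι → ι → L) (hT : ∀ i j, j ≤ i → T i j = 0) (h : ∀ i j, i < j → ⁅b i, b j⁆ = T i j)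
    (i j : ι) : ⁅b i, b j⁆ = T i j - T j i := by
  rcases lt_trichotomy i j with hij | rfl | hij
  · rw [h i j hij, hT j i hij.le, sub_zero]
  · rw [hT i i le_rfl, sub_self, lie_self]
  · rw [← lie_skew, h j i hij, hT i j hij.le, zero_sub]

section Tables

variable {L : Type*} [AddCommGroup L] [Module ℝ L] (b : Fin 7 → L)

theorem L732T_eq_zero_of_le (i j : Fin 7) (h : j ≤ i) : L732T b i j = 0 := by
  simp only [L732T]
  repeat' rw [if_neg (by omega)]

theorem L74T_eq_zero_of_le (i j : Fin 7) (h : j ≤ i) : L74T b i j = 0 := by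
  simp only [L74T]
  repeat' rw [if_neg (by omega)]

end Tables

theorem addRel45_basis {L : Type*} [LieRing L] [LieAlgebra ℝ L] (b : Basis (Fin 7) ℝ L)
    (i j : Fin 7) : addRel45 b (b i) (b j) = skewPair 3 4 (b 5) i j := by
  simp [addRel45]

noncomputable def deformedLie {L : Type*} [LieRing L] [LieAlgebra ℝ L] (ε : ℝ)
    (b : Basis (Fin 7) ℝ L) : L →ₗ[ℝ] L →ₗ[ℝ] L :=
  (LieModule.toEnd ℝ L L : L →ₗ[ℝ] Module.End ℝ L) + ε • addRel45 b

theorem deformedLie_apply {L : Type*} [LieRing L] [LieAlgebra ℝ L] (ε : ℝ)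
    (b : Basis (Fin 7) ℝ L) (X Y : L) : deformedLie ε b X Y = ⁅X, Y⁆ + ε • addRel45 b X Y :=
  rfl

section Deformation

variable {ε : ℝ} (hε : ε ≠ 0) {L M : Type*} [LieRing L] [LieAlgebra ℝ L] [LieRing M]
  [LieAlgebra ℝ M] (b : Basis (Fin 7) ℝ L) (c : Basis (Fin 7) ℝ M)

noncomputable def deformationEquiv : L ≃ₗ[ℝ] M :=
  b.equiv (c.isUnitSMul (w := fun i => if i = 5 then ε⁻¹ else 1)
    fun i => by split_ifs <;> simp [hε]) (Equiv.refl _)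

theorem deformationEquiv_basis (i : Fin 7) :
    deformationEquiv hε b c (b i) = (if i = 5 then ε⁻¹ else 1) • c i := by
  simp [deformationEquiv, Basis.equiv_apply, Basis.isUnitSMul_apply]

variable {b c}

theorem deformationEquiv_deformedLie_basis
    (hL : ∀ i j : Fin 7, i < j → ⁅b i, b j⁆ = L732T (⇑b) i j)
    (hM : ∀ i j : Fin 7, i < j → ⁅c i, c j⁆ = L74T (⇑c) i j) (i j : Fin 7) :
    deformationEquiv hε b c (deformedLie ε b (b i) (b j)) =
      ⁅deformationEquiv hε b c (b i), deformationEquiv hε b c (b j)⁆ := by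
  rw [deformedLie_apply, addRel45_basis, lie_eq_sub_of_upper b _ (L732T_eq_zero_of_le b) hL,
    deformationEquiv_basis, deformationEquiv_basis, smul_lie, lie_smul,
    lie_eq_sub_of_upper c _ (L74T_eq_zero_of_le c) hM]
  fin_cases i <;> fin_cases j <;>
    simp [L732T, L74T, skewPair, deformationEquiv_basis, smul_smul, hε, mul_comm]

theorem deformationEquiv_deformedLie
    (hL : ∀ i j : Fin 7, i < j → ⁅b i, b j⁆ = L732T (⇑b) i j)
    (hM : ∀ i j : Fin 7, i < j → ⁅c i, c j⁆ = L74T (⇑c) i j) (X Y : L) :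
    deformationEquiv hε b c (deformedLie ε b X Y) =
      ⁅deformationEquiv hε b c X, deformationEquiv hε b c Y⁆ :=
  map_apply_eq_lie_of_basis b (deformationEquiv hε b c).toLinearMap (deformedLie ε b)
    (deformationEquiv_deformedLie_basis hε hL hM) X Y

end Deformation

/-- For every `ε ≠ 0`, the bracket obtained from `L_{7,3}²` by adding the relation
`[X₄,X₅] = ε X₆` is alternating, satisfies the Jacobi identity, and the resulting Lie
algebra is isomorphic to `L_{7,4}`. -/
theorem L732_deformed_is_L74 (ε : ℝ) (hε : ε ≠ 0)
    (L : Type) [LieRing L] [LieAlgebra ℝ L]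
    (b : Module.Basis (Fin 7) ℝ L) (hL : ∀ i j : Fin 7, i < j → ⁅b i, b j⁆ = L732T (⇑b) i j)
    (M : Type) [LieRing M] [LieAlgebra ℝ M]
    (c : Module.Basis (Fin 7) ℝ M) (hM : ∀ i j : Fin 7, i < j → ⁅c i, c j⁆ = L74T (⇑c) i j) :
    (∀ X : L, ⁅X, X⁆ + ε • addRel45 b X X = 0) ∧
    (∀ X Y Z : L,
      (⁅X, ⁅Y, Z⁆ + ε • addRel45 b Y Z⁆ + ε • addRel45 b X (⁅Y, Z⁆ + ε • addRel45 b Y Z)) +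
      (⁅Z, ⁅X, Y⁆ + ε • addRel45 b X Y⁆ + ε • addRel45 b Z (⁅X, Y⁆ + ε • addRel45 b X Y)) +
      (⁅Y, ⁅Z, X⁆ + ε • addRel45 b Z X⁆ + ε • addRel45 b Y (⁅Z, X⁆ + ε • addRel45 b Z X)) = 0) ∧
    (∃ e : L ≃ₗ[ℝ] M, ∀ X Y : L, e (⁅X, Y⁆ + ε • addRel45 b X Y) = ⁅e X, e Y⁆) := by
  set e := deformationEquiv hε b c
  have he : ∀ X Y, e (deformedLie ε b X Y) = ⁅e X, e Y⁆ := deformationEquiv_deformedLie hε hL hM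
  exact ⟨self_eq_zero_of_map_eq_lie e.toAddMonoidHom e.injective _ he,
    jacobi_of_map_eq_lie e.toAddMonoidHom e.injective _ he, e, he⟩
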